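/- Let Π be a nonempty finite set, f : Π → ℝ, and g : Π → ℝ^N, and let λ ∈ ℝ^N with λ_i ≥ 0 for all i. Let S ⊆ Π and suppose π_inc ∈ S is feasible, f(π_inc) ≤ f(π) for every feasible π ∈ S, and f(π_inc) ≤ L(λ,π) for every π ∈ Π \ S. Then π_inc is optimal over all of Π: f(π_inc) ≤ f(π) for every feasible π ∈ Π. (Correctness of the anytime algorithm's termination test: once the incumbent feasible cost is below the Lagrangian value of every policy not yet enumerated, the incumbent is optimal.) -/
import Mathlib


/-- Correctness of the anytime algorithm's termination test: if the incumbent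
is feasible, best among the feasible policies enumerated so far (`S`), and its
cost is below the Lagrangian value of every policy not yet enumerated, then
the incumbent is optimal over all of `P`. -/
theorem anytime_termination_correct {P : Type*} [Fintype P] [Nonempty P] {N : ℕ}
    (f : P → ℝ) (g : P → Fin N → ℝ) (lam : Fin N → ℝ)
    (hlam : ∀ i, 0 ≤ lam i)
    (S : Set P) (πinc : P)
    (hmem : πinc ∈ S)
    (hfeas : ∀ i, g πinc i ≤ 0)
    (hbestS : ∀ π ∈ S, (∀ i, g π i ≤ 0) → f πinc ≤ f π)
    (hrest : ∀ π ∈ Set.univ \ S, f πinc ≤ f π + ∑ i, lam i * g π i) :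
    ∀ π : P, (∀ i, g π i ≤ 0) → f πinc ≤ f π := by
  intro π hπ
  by_cases hS : π ∈ S
  · exact hbestS π hS hπ
  · have h := hrest π ⟨Set.mem_univ π, hS⟩
    have hsum : ∑ i, lam i * g π i ≤ 0 :=
      Finset.sum_nonpos fun i _ => mul_nonpos_of_nonneg_of_nonpos (hlam i) (hπ i)
    linarith
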